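/- arXiv:1808.05273 — 3 statements merged into one kernel-verified Lean document; each statement's English description precedes it below -/
import Mathlib

section
/- A binary form G ∈ ℝ[x,y] of degree n ≥ 1 has identically vanishing Hessian determinant G_xx·G_yy − G_xy² if and only if G is a scalar multiple of the n-th power of a linear form. -/
open MvPolynomial

/-- The Hessian determinant `G_xx·G_yy − G_xy²` of a bivariate polynomial. -/
noncomputable def hess (p : MvPolynomial (Fin 2) ℝ) : MvPolynomial (Fin 2) ℝ :=
  pderiv 0 (pderiv 0 p) * pderiv 1 (pderiv 1 p) - (pderiv 0 (pderiv 1 p)) ^ 2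

namespace HessAux

abbrev MvP := MvPolynomial (Fin 2) ℝ

/-! ### Generalities -/

lemma degree_fin2 (d : Fin 2 →₀ ℕ) : d.degree = d 0 + d 1 := by
  rw [Finsupp.degree, ← Fin.sum_univ_two (fun i => d i)]
  exact Finset.sum_subset (Finset.subset_univ _)
    (fun i _ h => Finsupp.notMem_support_iff.mp h)

lemma pderiv_comm' (i j : Fin 2) (p : MvP) :
    pderiv i (pderiv j p) = pderiv j (pderiv i p) := by
  induction p using MvPolynomial.induction_on with
  | C a => simp [pderiv_C]
  | add p q hp hq => simp [hp, hq]
  | mul_X p k ih =>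
      simp only [pderiv_mul, map_add, pderiv_mul, ih]
      rcases eq_or_ne k i with rfl | hki <;> rcases eq_or_ne k j with rfl | hkj <;>
        simp_all [pderiv_X_self, pderiv_X_of_ne, pderiv_one] <;> ring

lemma pderiv01 (p : MvP) : pderiv 0 (pderiv 1 p) = pderiv 1 (pderiv 0 p) :=
  pderiv_comm' 0 1 p

lemma pderiv_two (i : Fin 2) : pderiv i (2 : MvP) = 0 := by
  rw [← map_ofNat (C : ℝ →+* MvP) 2, pderiv_C]

lemma X_mul_pderiv_monomial (i : Fin 2) (d : Fin 2 →₀ ℕ) (a : ℝ) :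
    X i * pderiv i (monomial d a) = monomial d (a * d i) := by
  rw [pderiv_monomial]
  rcases Nat.eq_zero_or_pos (d i) with h | h
  · simp [h]
  · rw [X, monomial_mul, one_mul]
    rw [add_comm, tsub_add_cancel_of_le (Finsupp.single_le_iff.mpr h)]

/-- Euler's identity for homogeneous binary forms. -/
lemma euler {n : ℕ} {p : MvP} (hp : p.IsHomogeneous n) :
    X 0 * pderiv 0 p + X 1 * pderiv 1 p = C (n : ℝ) * p := by
  conv_lhs => rw [p.as_sum]
  rw [map_sum, map_sum, Finset.mul_sum, Finset.mul_sum, ← Finset.sum_add_distrib]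
  conv_rhs => rw [p.as_sum, Finset.mul_sum]
  refine Finset.sum_congr rfl fun d hd => ?_
  rw [X_mul_pderiv_monomial, X_mul_pderiv_monomial, ← map_add, C_mul_monomial]
  congr 1
  have : d.degree = n := by
    rw [Finsupp.degree_eq_weight_one]; exact hp (mem_support_iff.mp hd)
  rw [degree_fin2] at this
  push_cast [← this]
  ring

lemma isHomogeneous_pderiv {n : ℕ} {p : MvP} (hp : p.IsHomogeneous (n + 1))
    (i : Fin 2) : (pderiv i p).IsHomogeneous n := by
  conv_lhs => rw [p.as_sum]
  rw [map_sum]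
  refine IsHomogeneous.sum _ _ _ fun d hd => ?_
  rw [pderiv_monomial]
  rcases Nat.eq_zero_or_pos (d i) with h | h
  · simp only [h, Nat.cast_zero, mul_zero, monomial_zero]
    exact isHomogeneous_zero _ _ _
  · apply isHomogeneous_monomial
    have hdeg : d.degree = n + 1 := by
      rw [Finsupp.degree_eq_weight_one]; exact hp (mem_support_iff.mp hd)
    rw [degree_fin2] at hdeg
    rw [degree_fin2]
    simp only [Finsupp.tsub_apply]
    obtain rfl | rfl : i = 0 ∨ i = 1 := by
      fin_cases i <;> [exact Or.inl rfl; exact Or.inr rfl]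
    · simp [Finsupp.single_apply]; omega
    · simp [Finsupp.single_apply]; omega

lemma eq_C_of_isHomogeneous_zero {p : MvP} (hp : p.IsHomogeneous 0) :
    ∃ r : ℝ, p = C r := by
  refine ⟨coeff 0 p, MvPolynomial.ext _ _ fun d => ?_⟩
  rcases eq_or_ne d 0 with rfl | hd
  · simp [coeff_C]
  · rw [coeff_C, if_neg (by exact fun h => hd h.symm)]
    exact hp.coeff_eq_zero (by simpa [Finsupp.degree_eq_zero_iff] using hd)

/-! ### Abstract commutative-ring computations -/

section Ring
variable {R : Type*} [CommRing R] [IsDomain R]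

/-- From the Euler identities and the vanishing Hessian, derive the three key relations. -/
lemma rel (t X0 X1 G P Q b1 b2 b3 : R) (ht : t + 1 ≠ 0)
    (e0 : X0*P + X1*Q = (t+2)*G)
    (e1 : X0*b1 + X1*b2 = (t+1)*P)
    (e2 : X0*b2 + X1*b3 = (t+1)*Q)
    (h : b1*b3 - b2^2 = 0) :
    (t+1)*P^2 = (t+2)*(b1*G) ∧ (t+1)*Q^2 = (t+2)*(b3*G) ∧
      (t+1)*(P*Q) = (t+2)*(b2*G) := by
  refine ⟨?_, ?_, ?_⟩
  · have k : (t+1)*((t+1)*P^2 - (t+2)*(b1*G)) = 0 := by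
      linear_combination ((t+1)*b1)*e0 + (-(X1*b2) - (t+1)*P)*e1 + (X1*b1)*e2 - X1^2*h
    rcases mul_eq_zero.mp k with h' | h'
    · exact absurd h' ht
    · linear_combination h'
  · have k : (t+1)*((t+1)*Q^2 - (t+2)*(b3*G)) = 0 := by
      linear_combination ((t+1)*b3)*e0 + (X0*b3)*e1 + (-(X0*b2) - (t+1)*Q)*e2 - X0^2*h
    rcases mul_eq_zero.mp k with h' | h'
    · exact absurd h' ht
    · linear_combination h'
  · have k : (t+1)*((t+1)*(P*Q) - (t+2)*(b2*G)) = 0 := by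
      linear_combination ((t+1)*b2)*e0 + (b2*X0 - (t+1)*Q)*e1 + (b2*X1 - X0*b1 - X1*b2)*e2
        + X0*X1*h
    rcases mul_eq_zero.mp k with h' | h'
    · exact absurd h' ht
    · linear_combination h'

/-- The core computation: the relations force the Hessian of the derivative to vanish. -/
lemma core (t G P Q b1 b2 b3 c1 c2 c3 : R) (ht : t + 2 ≠ 0) (hG : G ≠ 0)
    (u1 : (t+1)*P^2 = (t+2)*(b1*G))
    (u2 : (t+1)*Q^2 = (t+2)*(b3*G))
    (u3 : (t+1)*(P*Q) = (t+2)*(b2*G))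
    (w1 : (t+1)*(2*(P*b1)) = (t+2)*(c1*G + b1*P))
    (w2 : (t+1)*(2*(P*b2)) = (t+2)*(c2*G + b1*Q))
    (w3 : (t+1)*(b2*Q + P*b3) = (t+2)*(c3*G + b2*Q)) :
    c1*c3 - c2^2 = 0 := by
  have hE1 : (t+2)*(G*c1) = t*(P*b1) := by linear_combination -w1
  have hE2 : (t+2)*(G*c2) = 2*(t+1)*(P*b2) - (t+2)*(b1*Q) := by linear_combination -w2
  have hE3 : (t+2)*(G*c3) = (t+1)*(P*b3) - b2*Q := by linear_combination -w3
  have hF1 : (t+2)^2*(G^2*c1) = t*(t+1)*P^3 := by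
    linear_combination ((t+2)*G)*hE1 - (t*P)*u1
  have hF2 : (t+2)^2*(G^2*c2) = t*(t+1)*(P^2*Q) := by
    linear_combination ((t+2)*G)*hE2 - (2*(t+1)*P)*u3 + ((t+2)*Q)*u1
  have hF3 : (t+2)^2*(G^2*c3) = t*(t+1)*(P*Q^2) := by
    linear_combination ((t+2)*G)*hE3 - ((t+1)*P)*u2 + Q*u3
  have key : (t+2)^4*(G^4*(c1*c3 - c2^2)) = 0 := by
    linear_combination ((t+2)^2*(G^2*c3))*hF1 + (t*(t+1)*P^3)*hF3
      - ((t+2)^2*(G^2*c2) + t*(t+1)*(P^2*Q))*hF2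
  rcases mul_eq_zero.mp key with h' | h'
  · exact absurd h' (pow_ne_zero _ ht)
  rcases mul_eq_zero.mp h' with h' | h'
  · exact absurd h' (pow_ne_zero _ hG)
  · exact h'

end Ring

/-! ### Linear forms and their powers -/

lemma pderiv0_L (a b : ℝ) : pderiv 0 (C a * X 0 + C b * X 1 : MvP) = C a := by
  simp [pderiv_C_mul, pderiv_X_of_ne (show (1:Fin 2) ≠ 0 by decide)]

lemma pderiv1_L (a b : ℝ) : pderiv 1 (C a * X 0 + C b * X 1 : MvP) = C b := by
  simp [pderiv_C_mul, pderiv_X_of_ne (show (0:Fin 2) ≠ 1 by decide)]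

lemma pderiv0_linpow (c a b : ℝ) (k : ℕ) :
    pderiv 0 (C c * (C a * X 0 + C b * X 1) ^ (k+1) : MvP) =
      C (c * (a * ((k:ℝ)+1))) * (C a * X 0 + C b * X 1) ^ k := by
  rw [pderiv_C_mul, pderiv_pow, pderiv0_L]
  have hc : (C c : MvP) * (((k+1 : ℕ) : MvP) * C a) = C (c * (a * ((k:ℝ)+1))) := by
    rw [← C_eq_coe_nat, ← map_mul, ← map_mul]
    congr 1
    push_cast
    ring
  calc C c * (((k+1 : ℕ) : MvP) * (C a * X 0 + C b * X 1) ^ (k+1-1) * C a)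
      = (C c * (((k+1 : ℕ) : MvP) * C a)) * (C a * X 0 + C b * X 1) ^ k := by
        norm_num; ring
    _ = C (c * (a * ((k:ℝ)+1))) * (C a * X 0 + C b * X 1) ^ k := by rw [hc]

lemma pderiv1_linpow (c a b : ℝ) (k : ℕ) :
    pderiv 1 (C c * (C a * X 0 + C b * X 1) ^ (k+1) : MvP) =
      C (c * (b * ((k:ℝ)+1))) * (C a * X 0 + C b * X 1) ^ k := by
  rw [pderiv_C_mul, pderiv_pow, pderiv1_L]
  have hc : (C c : MvP) * (((k+1 : ℕ) : MvP) * C b) = C (c * (b * ((k:ℝ)+1))) := by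
    rw [← C_eq_coe_nat, ← map_mul, ← map_mul]
    congr 1
    push_cast
    ring
  calc C c * (((k+1 : ℕ) : MvP) * (C a * X 0 + C b * X 1) ^ (k+1-1) * C b)
      = (C c * (((k+1 : ℕ) : MvP) * C b)) * (C a * X 0 + C b * X 1) ^ k := by
        norm_num; ring
    _ = C (c * (b * ((k:ℝ)+1))) * (C a * X 0 + C b * X 1) ^ k := by rw [hc]

/-- Backward direction: powers of linear forms have vanishing Hessian. -/
lemma hess_rep (c a b : ℝ) (n : ℕ) :
    hess (C c * (C a * X 0 + C b * X 1) ^ n : MvP) = 0 := by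
  match n with
  | 0 => simp [hess, pderiv_C_mul]
  | 1 =>
      rw [hess, pow_one]
      have h0 : pderiv 0 (C c * (C a * X 0 + C b * X 1) : MvP) = C (c*a) := by
        rw [pderiv_C_mul, pderiv0_L, ← map_mul]
      have h1 : pderiv 1 (C c * (C a * X 0 + C b * X 1) : MvP) = C (c*b) := by
        rw [pderiv_C_mul, pderiv1_L, ← map_mul]
      rw [h0, h1, pderiv_C, pderiv_C, pderiv_C]
      ring
  | (j+2) =>
      simp only [hess, pderiv0_linpow, pderiv1_linpow]
      have hc : (C ((c * (a * (((j+1:ℕ):ℝ)+1))) * (a * ((j:ℝ)+1))) : MvP) *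
            C ((c * (b * (((j+1:ℕ):ℝ)+1))) * (b * ((j:ℝ)+1)))
          = C ((c * (b * (((j+1:ℕ):ℝ)+1))) * (a * ((j:ℝ)+1))) *
            C ((c * (b * (((j+1:ℕ):ℝ)+1))) * (a * ((j:ℝ)+1))) := by
        rw [← map_mul, ← map_mul]
        congr 1
        ring
      linear_combination ((C a * X 0 + C b * X 1 : MvP)^j *
        (C a * X 0 + C b * X 1)^j) * hc

/-- The final step: the key relation pins down `G` as a multiple of `L^(k+2)`. -/
lemma endgame (k : ℕ) (G : MvP) (c e a b : ℝ) (hc : c ≠ 0)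
    (hL : (C a * X 0 + C b * X 1 : MvP) ≠ 0)
    (u : C ((k:ℝ)+1) * (C c * (C a * X 0 + C b * X 1)^(k+1))^2
        = C ((k:ℝ)+2) * ((C (c * (e * ((k:ℝ)+1))) * (C a * X 0 + C b * X 1)^k) * G)) :
    ∃ c' : ℝ, G = C c' * (C a * X 0 + C b * X 1)^(k+2) := by
  set L : MvP := C a * X 0 + C b * X 1 with hLdef
  have hA : (C (((k:ℝ)+1)*c^2) : MvP) = C ((k:ℝ)+1) * C c * C c := by
    rw [map_mul, map_pow]; ring
  have hB : (C (((k:ℝ)+2)*(c * (e * ((k:ℝ)+1)))) : MvP)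
      = C ((k:ℝ)+2) * C (c * (e * ((k:ℝ)+1))) := map_mul _ _ _
  have key : L^k * (C (((k:ℝ)+1)*c^2) * L^(k+2)
      - C (((k:ℝ)+2)*(c * (e * ((k:ℝ)+1)))) * G) = 0 := by
    linear_combination u + (L^k * L^(k+2)) * hA - (L^k * G) * hB
  have hLk : (L^k : MvP) ≠ 0 := pow_ne_zero _ hL
  have heq : C (((k:ℝ)+1)*c^2) * L^(k+2) = C (((k:ℝ)+2)*(c * (e * ((k:ℝ)+1)))) * G := by
    rcases mul_eq_zero.mp key with h' | h'
    · exact absurd h' hLk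
    · exact sub_eq_zero.mp h'
  have hnum : ((k:ℝ)+1)*c^2 ≠ 0 :=
    mul_ne_zero (by positivity) (pow_ne_zero 2 hc)
  have hLHS : C (((k:ℝ)+1)*c^2) * L^(k+2) ≠ 0 :=
    mul_ne_zero (fun h => hnum (MvPolynomial.C_eq_zero.mp h)) (pow_ne_zero _ hL)
  have he : e ≠ 0 := by
    rintro rfl
    rw [show ((k:ℝ)+2)*(c * (0 * ((k:ℝ)+1))) = 0 by ring, map_zero, zero_mul] at heq
    exact hLHS heq
  have hden : ((k:ℝ)+2)*(c * (e * ((k:ℝ)+1))) ≠ 0 := by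
    have h1 : (k:ℝ)+2 ≠ 0 := by positivity
    have h2 : (k:ℝ)+1 ≠ 0 := by positivity
    exact mul_ne_zero h1 (mul_ne_zero hc (mul_ne_zero he h2))
  refine ⟨(((k:ℝ)+1)*c^2) / (((k:ℝ)+2)*(c * (e * ((k:ℝ)+1)))), ?_⟩
  apply mul_left_cancel₀
    (show (C (((k:ℝ)+2)*(c * (e * ((k:ℝ)+1)))) : MvP) ≠ 0 from
      fun h => hden (MvPolynomial.C_eq_zero.mp h))
  rw [← heq, ← mul_assoc, ← map_mul]
  congr 2
  field_simp

lemma C_cast_add_one (j : ℕ) : (C ((j+1:ℕ):ℝ) : MvP) = C ((j:ℕ):ℝ) + 1 := by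
  rw [show (((j+1:ℕ):ℝ)) = ((j:ℕ):ℝ) + 1 by push_cast; ring, map_add, map_one]

lemma htC1 (m : ℕ) : (C ((m:ℕ):ℝ) : MvP) + 1 ≠ 0 := by
  rw [← map_one (C : ℝ →+* MvP), ← map_add, Ne, MvPolynomial.C_eq_zero]
  positivity

lemma htC2 (m : ℕ) : (C ((m:ℕ):ℝ) : MvP) + 2 ≠ 0 := by
  rw [← map_ofNat (C : ℝ →+* MvP) 2, ← map_add, Ne, MvPolynomial.C_eq_zero]
  positivity

lemma cast1' (m : ℕ) : (C (((m:ℕ):ℝ)+1) : MvP) = C ((m:ℕ):ℝ) + 1 := by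
  rw [map_add, map_one]

lemma cast2' (m : ℕ) : (C (((m:ℕ):ℝ)+2) : MvP) = C ((m:ℕ):ℝ) + 2 := by
  rw [map_add, map_ofNat]

/-- Forward direction, by induction on the degree. -/
lemma forward : ∀ (m : ℕ) (G : MvP), G.IsHomogeneous (m+1) → hess G = 0 →
    ∃ c a b : ℝ, G = C c * (C a * X 0 + C b * X 1) ^ (m+1) := by
  intro m
  induction m with
  | zero =>
      intro G hG _
      obtain ⟨r, hr⟩ := eq_C_of_isHomogeneous_zero (isHomogeneous_pderiv hG 0)
      obtain ⟨s, hs⟩ := eq_C_of_isHomogeneous_zero (isHomogeneous_pderiv hG 1)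
      have h := euler hG
      rw [hr, hs] at h
      refine ⟨1, r, s, ?_⟩
      rw [pow_one, map_one, one_mul]
      have h1 : (C ((1:ℕ):ℝ) : MvP) = 1 := by norm_num
      rw [h1, one_mul] at h
      linear_combination -h
  | succ m IH =>
      intro G hG hhess
      rcases eq_or_ne G 0 with rfl | hGne
      · exact ⟨0, 0, 0, by simp⟩
      -- Euler identities
      have e0 : X 0 * pderiv 0 G + X 1 * pderiv 1 G = (C ((m:ℕ):ℝ) + 2) * G := by
        have h := euler hG
        rw [C_cast_add_one (m+1), C_cast_add_one m] at h
        linear_combination h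
      have e1 : X 0 * pderiv 0 (pderiv 0 G) + X 1 * pderiv 1 (pderiv 0 G)
          = (C ((m:ℕ):ℝ) + 1) * pderiv 0 G := by
        have h := euler (isHomogeneous_pderiv hG 0)
        rwa [C_cast_add_one m] at h
      have e2 : X 0 * pderiv 1 (pderiv 0 G) + X 1 * pderiv 1 (pderiv 1 G)
          = (C ((m:ℕ):ℝ) + 1) * pderiv 1 G := by
        have h := euler (isHomogeneous_pderiv hG 1)
        rwa [C_cast_add_one m, pderiv01] at h
      have h' : pderiv 0 (pderiv 0 G) * pderiv 1 (pderiv 1 G)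
          - (pderiv 1 (pderiv 0 G))^2 = 0 := by
        unfold hess at hhess
        rwa [pderiv01] at hhess
      obtain ⟨u1, u2, u3⟩ := rel (C ((m:ℕ):ℝ)) (X 0) (X 1) G (pderiv 0 G) (pderiv 1 G)
        (pderiv 0 (pderiv 0 G)) (pderiv 1 (pderiv 0 G)) (pderiv 1 (pderiv 1 G))
        (htC1 m) e0 e1 e2 h'
      rcases eq_or_ne (pderiv 0 G) 0 with hP | hP
      · -- the x-derivative vanishes; work with the y-derivative instead
        rcases eq_or_ne (pderiv 1 G) 0 with hQ | hQ
        · rw [hP, hQ, mul_zero, mul_zero, add_zero] at e0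
          rcases mul_eq_zero.mp e0.symm with h'' | h''
          · exact absurd h'' (htC2 m)
          · exact absurd h'' hGne
        -- w-identities for the mirrored core computation
        have w1 : (C ((m:ℕ):ℝ) + 1) * (2*(pderiv 1 G * pderiv 1 (pderiv 1 G)))
            = (C ((m:ℕ):ℝ) + 2) * (pderiv 1 (pderiv 1 (pderiv 1 G)) * G
              + pderiv 1 (pderiv 1 G) * pderiv 1 G) := by
          have h := congrArg (pderiv 1) u2
          simp only [map_add, pderiv_mul, pderiv_pow, pderiv_C, pderiv_one, pderiv_two] at h
          linear_combination h
        have w2 : (C ((m:ℕ):ℝ) + 1) * (2*(pderiv 1 G * pderiv 1 (pderiv 0 G)))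
            = (C ((m:ℕ):ℝ) + 2) * (pderiv 1 (pderiv 1 (pderiv 0 G)) * G
              + pderiv 1 (pderiv 1 G) * pderiv 0 G) := by
          have h := congrArg (pderiv 0) u2
          simp only [map_add, pderiv_mul, pderiv_pow, pderiv_C, pderiv_one, pderiv_two,
            pderiv01] at h
          linear_combination h
        have w3 : (C ((m:ℕ):ℝ) + 1) * (pderiv 1 (pderiv 0 G) * pderiv 0 G
              + pderiv 1 G * pderiv 0 (pderiv 0 G))
            = (C ((m:ℕ):ℝ) + 2) * (pderiv 1 (pderiv 0 (pderiv 0 G)) * G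
              + pderiv 1 (pderiv 0 G) * pderiv 0 G) := by
          have h := congrArg (pderiv 0) u3
          simp only [map_add, pderiv_mul, pderiv_C, pderiv_one, pderiv_two, pderiv01] at h
          linear_combination h
        have hcore := core (C ((m:ℕ):ℝ)) G (pderiv 1 G) (pderiv 0 G)
          (pderiv 1 (pderiv 1 G)) (pderiv 1 (pderiv 0 G)) (pderiv 0 (pderiv 0 G))
          (pderiv 1 (pderiv 1 (pderiv 1 G))) (pderiv 1 (pderiv 1 (pderiv 0 G)))
          (pderiv 1 (pderiv 0 (pderiv 0 G)))
          (htC2 m) hGne u2 u1 (by linear_combination u3) w1 w2 w3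
        have hQhess : hess (pderiv 1 G) = 0 := by
          unfold hess
          simp only [pderiv01]
          linear_combination hcore
        obtain ⟨c₂, a₂, b₂, hrep⟩ := IH (pderiv 1 G) (isHomogeneous_pderiv hG 1) hQhess
        have hc2 : c₂ ≠ 0 := by
          rintro rfl
          rw [map_zero, zero_mul] at hrep
          exact hQ hrep
        have hLne : (C a₂ * X 0 + C b₂ * X 1 : MvP) ≠ 0 := by
          intro h
          rw [h, zero_pow (Nat.succ_ne_zero m), mul_zero] at hrep
          exact hQ hrep
        have hb3 : pderiv 1 (pderiv 1 G)
            = C (c₂ * (b₂ * ((m:ℝ)+1))) * (C a₂ * X 0 + C b₂ * X 1) ^ m := by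
          have h := congrArg (pderiv 1) hrep
          rwa [pderiv1_linpow] at h
        have u2' : C ((m:ℝ)+1) * (C c₂ * (C a₂ * X 0 + C b₂ * X 1)^(m+1))^2
            = C ((m:ℝ)+2) * ((C (c₂ * (b₂ * ((m:ℝ)+1))) * (C a₂ * X 0 + C b₂ * X 1)^m)
              * G) := by
          rw [cast1' m, cast2' m, ← hrep, ← hb3]
          exact u2
        obtain ⟨c', hG'⟩ := endgame m G c₂ b₂ a₂ b₂ hc2 hLne u2'
        exact ⟨c', a₂, b₂, hG'⟩
      · -- the x-derivative is nonzero
        have w1 : (C ((m:ℕ):ℝ) + 1) * (2*(pderiv 0 G * pderiv 0 (pderiv 0 G)))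
            = (C ((m:ℕ):ℝ) + 2) * (pderiv 0 (pderiv 0 (pderiv 0 G)) * G
              + pderiv 0 (pderiv 0 G) * pderiv 0 G) := by
          have h := congrArg (pderiv 0) u1
          simp only [map_add, pderiv_mul, pderiv_pow, pderiv_C, pderiv_one, pderiv_two] at h
          linear_combination h
        have w2 : (C ((m:ℕ):ℝ) + 1) * (2*(pderiv 0 G * pderiv 1 (pderiv 0 G)))
            = (C ((m:ℕ):ℝ) + 2) * (pderiv 1 (pderiv 0 (pderiv 0 G)) * G
              + pderiv 0 (pderiv 0 G) * pderiv 1 G) := by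
          have h := congrArg (pderiv 1) u1
          simp only [map_add, pderiv_mul, pderiv_pow, pderiv_C, pderiv_one, pderiv_two,
            pderiv01] at h
          linear_combination h
        have w3 : (C ((m:ℕ):ℝ) + 1) * (pderiv 1 (pderiv 0 G) * pderiv 1 G
              + pderiv 0 G * pderiv 1 (pderiv 1 G))
            = (C ((m:ℕ):ℝ) + 2) * (pderiv 1 (pderiv 1 (pderiv 0 G)) * G
              + pderiv 1 (pderiv 0 G) * pderiv 1 G) := by
          have h := congrArg (pderiv 1) u3
          simp only [map_add, pderiv_mul, pderiv_C, pderiv_one, pderiv_two, pderiv01] at h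
          linear_combination h
        have hcore := core (C ((m:ℕ):ℝ)) G (pderiv 0 G) (pderiv 1 G)
          (pderiv 0 (pderiv 0 G)) (pderiv 1 (pderiv 0 G)) (pderiv 1 (pderiv 1 G))
          (pderiv 0 (pderiv 0 (pderiv 0 G))) (pderiv 1 (pderiv 0 (pderiv 0 G)))
          (pderiv 1 (pderiv 1 (pderiv 0 G)))
          (htC2 m) hGne u1 u2 u3 w1 w2 w3
        have hPhess : hess (pderiv 0 G) = 0 := by
          unfold hess
          simp only [pderiv01]
          linear_combination hcore
        obtain ⟨c₁, a₁, b₁, hrep⟩ := IH (pderiv 0 G) (isHomogeneous_pderiv hG 0) hPhess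
        have hc1 : c₁ ≠ 0 := by
          rintro rfl
          rw [map_zero, zero_mul] at hrep
          exact hP hrep
        have hLne : (C a₁ * X 0 + C b₁ * X 1 : MvP) ≠ 0 := by
          intro h
          rw [h, zero_pow (Nat.succ_ne_zero m), mul_zero] at hrep
          exact hP hrep
        have hb1 : pderiv 0 (pderiv 0 G)
            = C (c₁ * (a₁ * ((m:ℝ)+1))) * (C a₁ * X 0 + C b₁ * X 1) ^ m := by
          have h := congrArg (pderiv 0) hrep
          rwa [pderiv0_linpow] at h
        have u1' : C ((m:ℝ)+1) * (C c₁ * (C a₁ * X 0 + C b₁ * X 1)^(m+1))^2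
            = C ((m:ℝ)+2) * ((C (c₁ * (a₁ * ((m:ℝ)+1))) * (C a₁ * X 0 + C b₁ * X 1)^m)
              * G) := by
          rw [cast1' m, cast2' m, ← hrep, ← hb1]
          exact u1
        obtain ⟨c', hG'⟩ := endgame m G c₁ a₁ a₁ b₁ hc1 hLne u1'
        exact ⟨c', a₁, b₁, hG'⟩

end HessAux

/-- A binary form `G` of degree `n ≥ 1` has identically vanishing Hessian determinant
if and only if `G` is a scalar multiple of the `n`-th power of a linear form. -/
theorem hessian_vanishes_iff_power_of_linear_form (n : ℕ) (hn : 1 ≤ n)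
    (G : MvPolynomial (Fin 2) ℝ) (hG : G.IsHomogeneous n) :
    hess G = 0 ↔ ∃ c a b : ℝ, G = C c * (C a * X 0 + C b * X 1) ^ n := by
  constructor
  · intro h
    obtain ⟨m, rfl⟩ : ∃ m, n = m + 1 := ⟨n - 1, by omega⟩
    exact HessAux.forward m G hG h
  · rintro ⟨c, a, b, rfl⟩
    exact HessAux.hess_rep c a b n
end

section
/- If a real homogeneous polynomial f_n ∈ ℝ[x,y] of degree n ≥ 2 is elliptic (its Hessian determinant has no real linear factors and is non-negative at every point of ℝ²), then f_n has no real linear factors. -/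
open MvPolynomial

/-- Evaluation of a bivariate polynomial at a point of ℝ². -/
noncomputable def ev (p : MvPolynomial (Fin 2) ℝ) (x y : ℝ) : ℝ :=
  eval ![x, y] p

/-- `p` has a real linear factor `a·x + b·y` (with `(a,b) ≠ (0,0)`). -/
def HasRealLinearFactor (p : MvPolynomial (Fin 2) ℝ) : Prop :=
  ∃ (a b : ℝ) (q : MvPolynomial (Fin 2) ℝ),
    (a ≠ 0 ∨ b ≠ 0) ∧ p = (C a * X 0 + C b * X 1) * q

lemma eval_bind₁' (x : Fin 2 → ℝ) (g : Fin 2 → MvPolynomial (Fin 2) ℝ)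
    (p : MvPolynomial (Fin 2) ℝ) :
    eval x (bind₁ g p) = eval (fun i => eval x (g i)) p := by
  simpa using eval₂Hom_bind₁ (RingHom.id ℝ) x g p

lemma X0_dvd_of_vanish (q : MvPolynomial (Fin 2) ℝ)
    (h : ∀ t : ℝ, eval ![(0:ℝ), t] q = 0) : X 0 ∣ q := by
  set Q := finSuccEquiv ℝ 1 q with hQ
  have hc : Q.coeff 0 = 0 := by
    apply MvPolynomial.funext
    intro x
    have h1 : eval (Fin.cons (0:ℝ) x) q =
        Polynomial.eval (0:ℝ) (Polynomial.map (eval x) Q) :=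
      eval_eq_eval_mv_eval' x 0 q
    have h2 : (Fin.cons (0:ℝ) x : Fin 2 → ℝ) = ![0, x 0] := by
      funext i
      refine Fin.cases rfl (fun j => ?_) i
      have : j = 0 := Subsingleton.elim _ _
      subst this; rfl
    rw [h2, h (x 0)] at h1
    rw [← Polynomial.coeff_zero_eq_eval_zero, Polynomial.coeff_map] at h1
    simp [← h1]
  obtain ⟨r, hr⟩ := Polynomial.X_dvd_iff.mpr hc
  refine ⟨(finSuccEquiv ℝ 1).symm r, ?_⟩
  have := congrArg (finSuccEquiv ℝ 1).symm hr
  rw [AlgEquiv.symm_apply_apply] at this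
  rw [this, map_mul]
  congr 1
  have : finSuccEquiv ℝ 1 (X 0) = Polynomial.X := finSuccEquiv_X_zero
  rw [← this, AlgEquiv.symm_apply_apply]

lemma line_dvd (a b : ℝ) (hab : a ≠ 0 ∨ b ≠ 0) (p : MvPolynomial (Fin 2) ℝ)
    (h : ∀ s t : ℝ, a * s + b * t = 0 → eval ![s, t] p = 0) :
    ∃ q, p = (C a * X 0 + C b * X 1) * q := by
  obtain ⟨c, d, hδ⟩ : ∃ c d : ℝ, a * d - b * c ≠ 0 := by
    rcases hab with ha | hb
    · exact ⟨0, 1, by simpa using ha⟩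
    · exact ⟨1, 0, by simpa using hb⟩
  set δ := a * d - b * c with hδdef
  set g : Fin 2 → MvPolynomial (Fin 2) ℝ :=
    ![C a * X 0 + C b * X 1, C c * X 0 + C d * X 1] with hg
  set g' : Fin 2 → MvPolynomial (Fin 2) ℝ :=
    ![C (d/δ) * X 0 + C (-b/δ) * X 1, C (-c/δ) * X 0 + C (a/δ) * X 1] with hg'
  have key : bind₁ g (bind₁ g' p) = p := by
    apply MvPolynomial.funext
    intro x
    rw [eval_bind₁', eval_bind₁']
    have hx : (fun i => eval (fun j => eval x (g j)) (g' i)) = x := by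
      funext i
      fin_cases i <;>
        · simp [hg, hg']
          field_simp
          ring
    rw [hx]
  have hvan : ∀ t : ℝ, eval ![(0:ℝ), t] (bind₁ g' p) = 0 := by
    intro t
    rw [eval_bind₁']
    have hpt : (fun i => eval ![(0:ℝ), t] (g' i)) = ![-b/δ * t, a/δ * t] := by
      funext i; fin_cases i <;> simp [hg'] <;> ring
    rw [hpt]
    apply h
    field_simp
    ring
  obtain ⟨r, hr⟩ := X0_dvd_of_vanish _ hvan
  refine ⟨bind₁ g r, ?_⟩
  calc p = bind₁ g (bind₁ g' p) := key.symm
    _ = bind₁ g (X 0 * r) := by rw [← hr]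
    _ = (C a * X 0 + C b * X 1) * bind₁ g r := by
        rw [map_mul, bind₁_X_right]; rfl

lemma hess_mul (a b : ℝ) (q : MvPolynomial (Fin 2) ℝ) :
    hess ((C a * X 0 + C b * X 1) * q) =
      (C a * X 0 + C b * X 1) *
        (C a * (2 * pderiv 0 q * pderiv 1 (pderiv 1 q))
          + C b * (2 * pderiv 1 q * pderiv 0 (pderiv 0 q))
          + (C a * X 0 + C b * X 1) *
              (pderiv 0 (pderiv 0 q) * pderiv 1 (pderiv 1 q) - (pderiv 0 (pderiv 1 q))^2)
          - 2 * pderiv 0 (pderiv 1 q) * (C b * pderiv 0 q + C a * pderiv 1 q))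
      - (C a * pderiv 1 q - C b * pderiv 0 q) ^ 2 := by
  simp only [hess, pderiv_mul, map_add, pderiv_C_mul, pderiv_X_self, pderiv_X_of_ne,
    pderiv_C, map_zero, zero_mul, mul_zero, mul_one, add_zero, zero_add,
    show (pderiv 0) (X (1 : Fin 2)) = 0 from pderiv_X_of_ne (by decide),
    show (pderiv 1) (X (0 : Fin 2)) = 0 from pderiv_X_of_ne (by decide)]
  ring

/-- If a real homogeneous polynomial `f_n` of degree `n ≥ 2` is elliptic (its Hessian
determinant is non-negative at every point of ℝ² and has no real linear factor), then
`f_n` has no real linear factor. -/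
theorem elliptic_has_no_real_linear_factor (n : ℕ) (hn : 2 ≤ n)
    (fn : MvPolynomial (Fin 2) ℝ) (hfn : fn.IsHomogeneous n)
    (hnonneg : ∀ x y : ℝ, 0 ≤ ev (hess fn) x y)
    (hnofac : ¬ HasRealLinearFactor (hess fn)) :
    ¬ HasRealLinearFactor fn := by
  rintro ⟨a, b, q, hab, hfq⟩
  apply hnofac
  have hvan : ∀ s t : ℝ, a * s + b * t = 0 → eval ![s, t] (hess fn) = 0 := by
    intro s t hst
    have h1 : eval ![s, t] (hess fn) =
        -(eval ![s, t] (C a * pderiv 1 q - C b * pderiv 0 q)) ^ 2 := by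
      rw [hfq, hess_mul]
      simp only [map_sub, map_mul, map_add, map_pow, eval_C, eval_X,
        Matrix.cons_val_zero, Matrix.cons_val_one, Matrix.head_cons]
      rw [hst]
      ring
    have h2 := hnonneg s t
    rw [show ev (hess fn) s t = eval ![s, t] (hess fn) from rfl, h1] at h2
    have h3 : (eval ![s, t] (C a * pderiv 1 q - C b * pderiv 0 q)) ^ 2 = 0 :=
      le_antisymm (by linarith) (sq_nonneg _)
    rw [h1, h3, neg_zero]
  obtain ⟨r, hr⟩ := line_dvd a b hab (hess fn) hvan
  exact ⟨a, b, r, hab, hr⟩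
end

section
/- Let f_n ∈ ℝ[x,y] be a homogeneous polynomial of degree n ≥ 2 which is the product of n pairwise non-proportional real linear forms. Then the Hessian determinant |Hess f_n| = (f_n)_xx(f_n)_yy − ((f_n)_xy)² is non-positive at every point of ℝ² (i.e., f_n is hyperbolic). -/
open MvPolynomial

namespace HypAux

open Finset

variable {n : ℕ}

/-- product of all form values except `i`. -/
noncomputable def Qr (ℓ : Fin n → ℝ) (i : Fin n) : ℝ := ∏ j ∈ univ.erase i, ℓ j
/-- product of all form values except `i, j`. -/
noncomputable def P2r (ℓ : Fin n → ℝ) (i j : Fin n) : ℝ := ∏ k ∈ (univ.erase i).erase j, ℓ k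
/-- first-derivative-type sum. -/
noncomputable def Tr (ℓ c : Fin n → ℝ) : ℝ := ∑ i, c i * Qr ℓ i
/-- second-derivative-type sum. -/
noncomputable def Sr (ℓ c d : Fin n → ℝ) : ℝ :=
  ∑ i, ∑ j ∈ univ.erase i, c i * d j * P2r ℓ i j

lemma Sr_symm (ℓ c d : Fin n → ℝ) : Sr ℓ c d = Sr ℓ d c := by
  rw [Sr, Finset.sum_comm' (s' := fun j => univ.erase j) (t' := univ)
    (by intro i j; simp [eq_comm, and_comm])]
  refine Finset.sum_congr rfl fun j _ => Finset.sum_congr rfl fun i _ => ?_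
  rw [P2r, P2r, Finset.erase_right_comm]; ring

lemma R1 (x y : ℝ) (ℓ a b : Fin n → ℝ) (hℓ : ∀ i, ℓ i = a i * x + b i * y) :
    x * Tr ℓ a + y * Tr ℓ b = n * ∏ i, ℓ i := by
  rw [Tr, Tr, Finset.mul_sum, Finset.mul_sum, ← Finset.sum_add_distrib]
  have : ∀ i ∈ (univ : Finset (Fin n)),
      x * (a i * Qr ℓ i) + y * (b i * Qr ℓ i) = ∏ j, ℓ j := by
    intro i _
    rw [← Finset.mul_prod_erase univ ℓ (mem_univ i), ← Qr, hℓ i]; ring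
  rw [Finset.sum_congr rfl this, Finset.sum_const, card_univ, Fintype.card_fin,
    nsmul_eq_mul]

lemma R2 (hn : 1 ≤ n) (x y : ℝ) (ℓ a b c : Fin n → ℝ)
    (hℓ : ∀ i, ℓ i = a i * x + b i * y) :
    x * Sr ℓ c a + y * Sr ℓ c b = ((n : ℝ) - 1) * Tr ℓ c := by
  rw [Sr, Sr, Finset.mul_sum, Finset.mul_sum, ← Finset.sum_add_distrib, Tr, Finset.mul_sum]
  refine Finset.sum_congr rfl fun i _ => ?_
  rw [Finset.mul_sum, Finset.mul_sum, ← Finset.sum_add_distrib]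
  have h1 : ∀ j ∈ univ.erase i,
      x * (c i * a j * P2r ℓ i j) + y * (c i * b j * P2r ℓ i j) = c i * Qr ℓ i := by
    intro j hj
    rw [Qr, ← Finset.mul_prod_erase _ ℓ hj, ← P2r, hℓ j]; ring
  rw [Finset.sum_congr rfl h1, Finset.sum_const, Finset.card_erase_of_mem (mem_univ i),
    card_univ, Fintype.card_fin, nsmul_eq_mul, Nat.cast_sub hn, Nat.cast_one]

lemma keyIneq (hn : 1 ≤ n) (ℓ c : Fin n → ℝ) :
    (n : ℝ) * (∏ i, ℓ i) * Sr ℓ c c ≤ ((n : ℝ) - 1) * (Tr ℓ c) ^ 2 := by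
  by_cases h0 : ∃ i, ℓ i = 0
  · obtain ⟨i, hi⟩ := h0
    rw [Finset.prod_eq_zero (mem_univ i) hi]
    have h1 : (1 : ℝ) ≤ (n : ℝ) := by exact_mod_cast hn
    have : (0:ℝ) ≤ ((n : ℝ) - 1) * (Tr ℓ c) ^ 2 :=
      mul_nonneg (by linarith) (sq_nonneg _)
    linarith
  push_neg at h0
  set F := ∏ i, ℓ i with hF
  set u : Fin n → ℝ := fun i => c i / ℓ i with hu
  have hci : ∀ i, c i * Qr ℓ i = u i * F := by
    intro i
    rw [hF, ← Finset.mul_prod_erase univ ℓ (mem_univ i), ← Qr, hu]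
    field_simp [h0 i]
  have hT : Tr ℓ c = (∑ i, u i) * F := by
    rw [Tr, Finset.sum_congr rfl fun i _ => hci i, ← Finset.sum_mul]
  have hS : Sr ℓ c c = ((∑ i, u i) ^ 2 - ∑ i, u i ^ 2) * F := by
    have hinner : ∀ i ∈ (univ : Finset (Fin n)),
        ∑ j ∈ univ.erase i, c i * c j * P2r ℓ i j = u i * ((∑ k, u k) - u i) * F := by
      intro i _
      have : ∀ j ∈ univ.erase i, c i * c j * P2r ℓ i j = u i * u j * F := by
        intro j hj
        have hQ : ℓ j * P2r ℓ i j = Qr ℓ i := by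
          rw [Qr, ← Finset.mul_prod_erase _ ℓ hj, P2r]
        have hFi : ℓ i * Qr ℓ i = F := by
          rw [hF, Qr, Finset.mul_prod_erase univ ℓ (mem_univ i)]
        have : c i * c j * P2r ℓ i j
            = (c i / ℓ i) * (c j / ℓ j) * (ℓ i * (ℓ j * P2r ℓ i j)) := by
          field_simp [h0 i, h0 j]
        rw [this, hQ, hFi, hu]
      rw [Finset.sum_congr rfl this]
      rw [← Finset.sum_mul, ← Finset.mul_sum, Finset.sum_erase_eq_sub (mem_univ i)]
    rw [Sr, Finset.sum_congr rfl hinner, ← Finset.sum_mul]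
    congr 1
    have h2 : ∀ i ∈ (univ : Finset (Fin n)),
        u i * ((∑ k, u k) - u i) = u i * (∑ k, u k) - u i ^ 2 := fun i _ => by ring
    rw [Finset.sum_congr rfl h2, Finset.sum_sub_distrib, ← Finset.sum_mul, sq]
  have hCS : (∑ i, u i) ^ 2 ≤ (n : ℝ) * ∑ i, u i ^ 2 := by
    have := sq_sum_le_card_mul_sum_sq (s := (univ : Finset (Fin n))) (f := u)
    simpa [card_univ] using this
  rw [hT, hS]
  nlinarith [sq_nonneg F, mul_nonneg (sq_nonneg F) (sub_nonneg.mpr hCS)]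

lemma mainReal (hn : 2 ≤ n) (x y : ℝ) (ℓ a b : Fin n → ℝ)
    (hℓ : ∀ i, ℓ i = a i * x + b i * y) :
    Sr ℓ a a * Sr ℓ b b - (Sr ℓ b a) ^ 2 ≤ 0 := by
  have hn1 : 1 ≤ n := le_trans (by norm_num) hn
  by_cases hy : y ≠ 0
  · have r1 := R1 x y ℓ a b hℓ
    have r2 := R2 hn1 x y ℓ a b a hℓ
    have r3 := R2 hn1 x y ℓ a b b hℓ
    have hsym : Sr ℓ a b = Sr ℓ b a := Sr_symm ℓ a b
    rw [hsym] at r2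
    have key := keyIneq hn1 ℓ a
    have hid : y ^ 2 * (Sr ℓ a a * Sr ℓ b b - (Sr ℓ b a) ^ 2)
        = ((n : ℝ) - 1) * ((n : ℝ) * (∏ i, ℓ i) * Sr ℓ a a - ((n : ℝ) - 1) * (Tr ℓ a) ^ 2) := by
      linear_combination (y * Sr ℓ a a) * r3
        - (y * Sr ℓ b a + ((n : ℝ) - 1) * Tr ℓ a) * r2 + ((n : ℝ) - 1) * Sr ℓ a a * r1
    have hn2 : (0:ℝ) ≤ (n : ℝ) - 1 := by
      have : (1:ℝ) ≤ (n:ℝ) := by exact_mod_cast hn1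
      linarith
    nlinarith [sq_nonneg y, mul_nonneg hn2 (sub_nonneg.mpr key),
      mul_pos (mul_self_pos.mpr hy) (mul_self_pos.mpr hy)]
  push_neg at hy
  by_cases hx : x ≠ 0
  · have r1 := R1 x y ℓ a b hℓ
    have r2 := R2 hn1 x y ℓ a b a hℓ
    have r3 := R2 hn1 x y ℓ a b b hℓ
    have hsym : Sr ℓ a b = Sr ℓ b a := Sr_symm ℓ a b
    rw [hsym] at r2
    have key := keyIneq hn1 ℓ b
    have hid : x ^ 2 * (Sr ℓ a a * Sr ℓ b b - (Sr ℓ b a) ^ 2)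
        = ((n : ℝ) - 1) * ((n : ℝ) * (∏ i, ℓ i) * Sr ℓ b b - ((n : ℝ) - 1) * (Tr ℓ b) ^ 2) := by
      linear_combination (x * Sr ℓ b b) * r2
        - (x * Sr ℓ b a + ((n : ℝ) - 1) * Tr ℓ b) * r3 + ((n : ℝ) - 1) * Sr ℓ b b * r1
    have hn2 : (0:ℝ) ≤ (n : ℝ) - 1 := by
      have : (1:ℝ) ≤ (n:ℝ) := by exact_mod_cast hn1
      linarith
    nlinarith [sq_nonneg x, mul_nonneg hn2 (sub_nonneg.mpr key),
      mul_pos (mul_self_pos.mpr hx) (mul_self_pos.mpr hx)]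
  push_neg at hx
  have hℓ0 : ∀ i, ℓ i = 0 := by intro i; rw [hℓ i, hx, hy]; ring
  rcases eq_or_lt_of_le hn with h2 | h3
  · subst h2
    have e0 : (univ : Finset (Fin 2)).erase 0 = {1} := by decide
    have e1 : (univ : Finset (Fin 2)).erase 1 = {0} := by decide
    have p01 : P2r ℓ 0 1 = 1 := by
      rw [P2r, e0]
      rw [show ({1} : Finset (Fin 2)).erase 1 = ∅ by decide, Finset.prod_empty]
    have p10 : P2r ℓ 1 0 = 1 := by
      rw [P2r, e1]
      rw [show ({0} : Finset (Fin 2)).erase 0 = ∅ by decide, Finset.prod_empty]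
    have hScd : ∀ c d : Fin 2 → ℝ, Sr ℓ c d = c 0 * d 1 + c 1 * d 0 := by
      intro c d
      rw [Sr, Fin.sum_univ_two, e0, e1, Finset.sum_singleton, Finset.sum_singleton,
        p01, p10]
      ring
    rw [hScd, hScd, hScd]
    nlinarith [sq_nonneg (a 0 * b 1 - a 1 * b 0)]
  · have hP : ∀ i j, j ∈ univ.erase i → P2r ℓ i j = 0 := by
      intro i j hj
      have hcard : ((univ.erase i).erase j).card = n - 2 := by
        rw [Finset.card_erase_of_mem hj, Finset.card_erase_of_mem (mem_univ i),
          card_univ, Fintype.card_fin]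
        omega
      have hne : ((univ.erase i).erase j).Nonempty := by
        rw [← Finset.card_pos, hcard]
        omega
      obtain ⟨k, hk⟩ := hne
      exact Finset.prod_eq_zero hk (hℓ0 k)
    have hS0 : ∀ c d : Fin n → ℝ, Sr ℓ c d = 0 := by
      intro c d
      rw [Sr]
      refine Finset.sum_eq_zero fun i _ => Finset.sum_eq_zero fun j hj => ?_
      rw [hP i j hj, mul_zero]
    rw [hS0, hS0, hS0]
    norm_num

lemma pderiv_finset_prod {ι : Type*} [DecidableEq ι] (d : Fin 2) (s : Finset ι)
    (f : ι → MvPolynomial (Fin 2) ℝ) :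
    pderiv d (∏ j ∈ s, f j) = ∑ j ∈ s, pderiv d (f j) * ∏ k ∈ s.erase j, f k := by
  induction s using Finset.induction_on with
  | empty => simp
  | insert _ _ h ih =>
    rename_i i s
    rw [Finset.prod_insert h, pderiv_mul, ih, Finset.sum_insert h, Finset.erase_insert h]
    rw [Finset.mul_sum]
    congr 1
    refine Finset.sum_congr rfl fun j hj => ?_
    rw [Finset.erase_insert_of_ne (by rintro rfl; exact h hj),
      Finset.prod_insert (fun hc => h (Finset.mem_of_mem_erase hc))]
    ring

lemma ev_second (a b cd ce : Fin n → ℝ) (d e : Fin 2)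
    (hd : ∀ i, pderiv d (C (a i) * X 0 + C (b i) * X 1) = C (cd i))
    (he : ∀ i, pderiv e (C (a i) * X 0 + C (b i) * X 1) = C (ce i)) (x y : ℝ) :
    eval ![x, y] (pderiv d (pderiv e (∏ i, (C (a i) * X (0:Fin 2) + C (b i) * X 1)))) =
      ∑ i, ∑ j ∈ univ.erase i, ce i * cd j *
        ∏ k ∈ (univ.erase i).erase j, (a k * x + b k * y) := by
  have step1 : pderiv e (∏ i, (C (a i) * X (0:Fin 2) + C (b i) * X 1)) =
      ∑ i, C (ce i) * ∏ j ∈ univ.erase i, (C (a j) * X (0:Fin 2) + C (b j) * X 1) := by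
    rw [pderiv_finset_prod]
    exact Finset.sum_congr rfl fun i _ => by rw [he i]
  rw [step1, map_sum]
  have step2 : ∀ i ∈ (univ : Finset (Fin n)),
      pderiv d (C (ce i) * ∏ j ∈ univ.erase i, (C (a j) * X (0:Fin 2) + C (b j) * X 1)) =
      C (ce i) * ∑ j ∈ univ.erase i, C (cd j) *
        ∏ k ∈ (univ.erase i).erase j, (C (a k) * X (0:Fin 2) + C (b k) * X 1) := by
    intro i _
    rw [pderiv_mul, pderiv_C, zero_mul, zero_add, pderiv_finset_prod]
    congr 1
    exact Finset.sum_congr rfl fun j _ => by rw [hd j]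
  rw [Finset.sum_congr rfl step2]
  rw [map_sum]
  refine Finset.sum_congr rfl fun i _ => ?_
  rw [map_mul, map_sum, eval_C, Finset.mul_sum]
  refine Finset.sum_congr rfl fun j _ => ?_
  rw [map_mul, eval_C, map_prod]
  have hevL : ∀ k ∈ (univ.erase i).erase j,
      eval ![x,y] (C (a k) * X (0:Fin 2) + C (b k) * X 1) = a k * x + b k * y := by
    intro k _
    simp [Matrix.cons_val_zero, Matrix.cons_val_one, Matrix.head_cons]
  rw [Finset.prod_congr rfl hevL]
  ring

end HypAux

open HypAux Finset in
/-- If `f_n` is the product of `n ≥ 2` pairwise non-proportional nonzero real linear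
forms, then its Hessian determinant is non-positive at every point of ℝ²
(`f_n` is hyperbolic). -/
theorem product_of_distinct_lines_is_hyperbolic (n : ℕ) (hn : 2 ≤ n)
    (a b : Fin n → ℝ) (hnz : ∀ i, a i ≠ 0 ∨ b i ≠ 0)
    (hnonprop : ∀ i j, i ≠ j → a i * b j ≠ a j * b i)
    (fn : MvPolynomial (Fin 2) ℝ)
    (hfn : fn = ∏ i, (C (a i) * X 0 + C (b i) * X 1)) :
    ∀ x y : ℝ, ev (hess fn) x y ≤ 0 := by
  intro x y
  subst hfn
  have hL0 : ∀ i, pderiv (0 : Fin 2) (C (a i) * X 0 + C (b i) * X 1) = C (a i) := by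
    intro i
    simp [pderiv_X_self, pderiv_X_of_ne (show (1 : Fin 2) ≠ 0 by decide)]
  have hL1 : ∀ i, pderiv (1 : Fin 2) (C (a i) * X 0 + C (b i) * X 1) = C (b i) := by
    intro i
    simp [pderiv_X_self, pderiv_X_of_ne (show (0 : Fin 2) ≠ 1 by decide)]
  have hxx := ev_second a b a a 0 0 hL0 hL0 x y
  have hyy := ev_second a b b b 1 1 hL1 hL1 x y
  have hxy := ev_second a b a b 0 1 hL0 hL1 x y
  have hmain := mainReal hn x y (fun i => a i * x + b i * y) a b (fun i => rfl)
  simp only [Sr, P2r] at hmain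
  rw [ev, hess, map_sub, map_mul, map_pow, hxx, hyy, hxy]
  exact hmain
end
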